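/- Suppose all K arms share the same parameters γ ∈ [0,1), λ ≥ 0, and b, with deterministic satiation dynamics. Then for any horizon T, the greedy policy (equivalently, the cyclic policy π_t = ((t-1) mod K) + 1) maximizes the cumulative reward Σ_{t=1}^T μ_{π_t, t} over all policies. -/
import Mathlib

open Finset



noncomputable def satLevel (γ : ℝ) (π : ℕ → ℕ) (k t : ℕ) : ℝ :=
  ∑ i ∈ Finset.Icc 1 (t-1), γ^(t-i) * (if π i = k then 1 else 0)

noncomputable def cumReward (γ lam b : ℝ) (π : ℕ → ℕ) (T : ℕ) : ℝ :=
  ∑ t ∈ Finset.Icc 1 T, (b - lam * satLevel γ π (π t) t)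

noncomputable def pen (γ : ℝ) (π : ℕ → ℕ) (T : ℕ) : ℝ :=
  ∑ t ∈ Finset.Icc 1 T, ∑ i ∈ (Finset.Icc 1 (t-1)).filter (fun i => π i = π t), γ^(t-i)

lemma cumReward_eq (γ lam b : ℝ) (π : ℕ → ℕ) (T : ℕ) :
    cumReward γ lam b π T = T * b - lam * pen γ π T := by
  have h1 : ∀ t, satLevel γ π (π t) t
      = ∑ i ∈ (Finset.Icc 1 (t-1)).filter (fun i => π i = π t), γ^(t-i) := by
    intro t
    rw [satLevel, Finset.sum_filter]
    exact Finset.sum_congr rfl (fun i _ => by split <;> simp)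
  simp only [cumReward, h1, Finset.sum_sub_distrib, Finset.sum_const, Nat.card_Icc,
    ← Finset.mul_sum, pen]
  simp [mul_comm]

lemma sum_lower_aux : ∀ (n : ℕ) (A : Finset ℕ), A.card = n → (∀ a ∈ A, 1 ≤ a) →
    ∑ i ∈ Icc 1 n, (i:ℝ) ≤ ∑ a ∈ A, (a:ℝ) := by
  intro n
  induction n with
  | zero =>
    intro A hA _
    simp only [show Icc 1 0 = (∅ : Finset ℕ) by rfl, Finset.sum_empty]
    exact Finset.sum_nonneg (fun a _ => by positivity)
  | succ n ih =>
    intro A hcard hpos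
    have hne : A.Nonempty := by rw [← Finset.card_pos, hcard]; omega
    have hMA : A.max' hne ∈ A := A.max'_mem hne
    set M := A.max' hne with hM
    have hsub : A ⊆ Icc 1 M := fun a ha =>
      Finset.mem_Icc.2 ⟨hpos a ha, A.le_max' a ha⟩
    have hMn : n + 1 ≤ M := by
      have := Finset.card_le_card hsub
      rw [hcard, Nat.card_Icc] at this; omega
    have herase : (A.erase M).card = n := by
      rw [Finset.card_erase_of_mem hMA, hcard]; omega
    have h1 : ∑ i ∈ Icc 1 n, (i:ℝ) ≤ ∑ a ∈ A.erase M, (a:ℝ) :=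
      ih _ herase (fun a ha => hpos a (Finset.erase_subset _ _ ha))
    have h2 : ∑ a ∈ A, (a:ℝ) = (M:ℝ) + ∑ a ∈ A.erase M, (a:ℝ) :=
      (Finset.add_sum_erase _ _ hMA).symm
    have h3 : Icc 1 (n+1) = insert (n+1) (Icc 1 n) :=
      (Finset.insert_Icc_right_eq_Icc_add_one (by omega)).symm
    rw [h2, h3, Finset.sum_insert (by simp)]
    push_cast
    have : ((n:ℝ)+1) ≤ M := by exact_mod_cast hMn
    linarith

lemma sum_upper_aux (T : ℕ) : ∀ (n : ℕ) (A : Finset ℕ), A.card = n → A ⊆ Icc 1 T →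
    ∑ a ∈ A, (a:ℝ) ≤ (∑ i ∈ Icc 1 n, (i:ℝ)) + n * ((T:ℝ) - n) := by
  intro n
  induction n with
  | zero => intro A hA _; simp [Finset.card_eq_zero.1 hA]
  | succ n ih =>
    intro A hcard hsub
    have hne : A.Nonempty := by rw [← Finset.card_pos, hcard]; omega
    have hmA : A.min' hne ∈ A := A.min'_mem hne
    set m := A.min' hne with hm
    have hsub2 : A ⊆ Icc m T := fun a ha =>
      Finset.mem_Icc.2 ⟨A.min'_le a ha, (Finset.mem_Icc.1 (hsub ha)).2⟩
    have hmn : m + n ≤ T := by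
      have h := Finset.card_le_card hsub2
      rw [hcard, Nat.card_Icc] at h
      have hmT : m ≤ T := (Finset.mem_Icc.1 (hsub hmA)).2
      omega
    have herase : (A.erase m).card = n := by
      rw [Finset.card_erase_of_mem hmA, hcard]; omega
    have h1 := ih _ herase (fun a ha => hsub (Finset.erase_subset _ _ ha))
    have h2 : ∑ a ∈ A, (a:ℝ) = (m:ℝ) + ∑ a ∈ A.erase m, (a:ℝ) :=
      (Finset.add_sum_erase _ _ hmA).symm
    have h3 : Icc 1 (n+1) = insert (n+1) (Icc 1 n) :=
      (Finset.insert_Icc_right_eq_Icc_add_one (by omega)).symm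
    rw [h2, h3, Finset.sum_insert (by simp)]
    have hmr : (m:ℝ) + n ≤ T := by exact_mod_cast hmn
    push_cast
    linarith

lemma sum_pow_ge {α : Type*} (γ : ℝ) (h0 : 0 < γ) (h1 : γ ≤ 1) (s : Finset α)
    (g : α → ℕ) (m : ℕ) (havg : ∑ a ∈ s, ((g a : ℝ)) ≤ s.card * m) :
    (s.card : ℝ) * γ ^ m ≤ ∑ a ∈ s, γ ^ (g a) := by
  set c := Real.log γ with hc
  have hcle : c ≤ 0 := Real.log_nonpos (le_of_lt h0) h1
  have hγn : ∀ n : ℕ, γ ^ n = Real.exp (c * n) := by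
    intro n
    rw [mul_comm, Real.exp_nat_mul, Real.exp_log h0]
  have key : ∀ a ∈ s, γ ^ m * (1 + c * ((g a : ℝ) - m)) ≤ γ ^ (g a) := by
    intro a _
    rw [hγn m, hγn (g a)]
    have h2 : c * (g a : ℝ) = c * m + c * ((g a : ℝ) - m) := by ring
    rw [h2, Real.exp_add]
    have h3 := Real.add_one_le_exp (c * ((g a : ℝ) - m))
    have h4 : (0:ℝ) < Real.exp (c * m) := Real.exp_pos _
    nlinarith [h4]
  have h5 : ∑ a ∈ s, γ ^ m * (1 + c * ((g a : ℝ) - m)) ≤ ∑ a ∈ s, γ ^ (g a) :=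
    Finset.sum_le_sum key
  have h6 : ∑ a ∈ s, γ ^ m * (1 + c * ((g a : ℝ) - m))
      = γ ^ m * (s.card + c * ((∑ a ∈ s, (g a : ℝ)) - s.card * m)) := by
    simp only [mul_add, mul_one, mul_sub, ← mul_assoc, Finset.sum_add_distrib,
      Finset.sum_sub_distrib, ← Finset.mul_sum, Finset.sum_const, nsmul_eq_mul]
    ring
  have hpow : (0:ℝ) < γ ^ m := pow_pos h0 m
  nlinarith [h5, h6, mul_nonneg (neg_nonneg.2 hcle) (sub_nonneg.2 havg)]


lemma pen_cyclic_le (γ : ℝ) (hγ0 : 0 ≤ γ) (K T : ℕ) (hK : 0 < K) :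
    pen γ (fun t => (t-1) % K + 1) T ≤ ∑ r ∈ Icc 1 T, ((T - r*K : ℕ) : ℝ) * γ^(r*K) := by
  have step1 : ∀ t ∈ Icc 1 T,
      (∑ i ∈ (Finset.Icc 1 (t-1)).filter
          (fun i => (i-1) % K + 1 = (t-1) % K + 1), γ^(t-i))
      ≤ ∑ j ∈ (Icc 1 T).filter (fun j => j*K < t), γ^(j*K) := by
    intro t ht
    rw [mem_Icc] at ht
    set F := (Finset.Icc 1 (t-1)).filter (fun i => (i-1) % K + 1 = (t-1) % K + 1) with hF
    have hmem : ∀ i ∈ F, 1 ≤ i ∧ i ≤ t - 1 ∧ (i-1) % K = (t-1) % K := by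
      intro i hi
      rw [hF, Finset.mem_filter, mem_Icc] at hi
      exact ⟨hi.1.1, hi.1.2, by omega⟩
    have hdvd : ∀ i ∈ F, K ∣ (t - i) := by
      intro i hi
      obtain ⟨h1, h2, h3⟩ := hmem i hi
      have := Nat.sub_mod_eq_zero_of_mod_eq h3.symm
      have he : t - 1 - (i - 1) = t - i := by omega
      rw [he] at this
      exact Nat.dvd_of_mod_eq_zero this
    have hcan : ∀ i ∈ F, (t - i) / K * K = t - i := fun i hi =>
      Nat.div_mul_cancel (hdvd i hi)
    have h1 : (∑ i ∈ F, γ^(t-i)) = ∑ i ∈ F, γ^(((t-i)/K)*K) := by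
      refine Finset.sum_congr rfl (fun i hi => ?_)
      rw [hcan i hi]
    have hinj : Set.InjOn (fun i => (t-i)/K) F := by
      intro i hi i' hi' he
      simp only at he
      have e1 := hcan i hi
      have e2 := hcan i' hi'
      rw [he] at e1
      obtain ⟨a1, a2, _⟩ := hmem i hi
      obtain ⟨b1, b2, _⟩ := hmem i' hi'
      omega
    have h2 : (∑ i ∈ F, γ^(((t-i)/K)*K)) = ∑ j ∈ F.image (fun i => (t-i)/K), γ^(j*K) := by
      rw [Finset.sum_image (fun i hi i' hi' h => hinj hi hi' h)]
    have hsub : F.image (fun i => (t-i)/K) ⊆ (Icc 1 T).filter (fun j => j*K < t) := by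
      intro j hj
      rw [Finset.mem_image] at hj
      obtain ⟨i, hi, hji⟩ := hj
      obtain ⟨a1, a2, _⟩ := hmem i hi
      have hKd := hdvd i hi
      have hpos : 1 ≤ t - i := by omega
      have hKle : K ≤ t - i := Nat.le_of_dvd (by omega) hKd
      have hjK : j * K = t - i := by rw [← hji]; exact hcan i hi
      rw [Finset.mem_filter, mem_Icc]
      have hj1 : 1 ≤ j := by
        rcases Nat.eq_zero_or_pos j with h | h
        · exfalso; rw [h, zero_mul] at hjK; omega
        · exact h
      have hjT : j ≤ T := by
        have : j ≤ j * K := Nat.le_mul_of_pos_right _ hK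
        omega
      exact ⟨⟨hj1, hjT⟩, by omega⟩
    rw [h1, h2]
    exact Finset.sum_le_sum_of_subset_of_nonneg hsub
      (fun j _ _ => pow_nonneg hγ0 _)
  calc pen γ (fun t => (t-1) % K + 1) T
      ≤ ∑ t ∈ Icc 1 T, ∑ j ∈ (Icc 1 T).filter (fun j => j*K < t), γ^(j*K) :=
        Finset.sum_le_sum step1
    _ = ∑ j ∈ Icc 1 T, ∑ t ∈ (Icc 1 T).filter (fun t => j*K < t), γ^(j*K) := by
        simp only [Finset.sum_filter]
        exact Finset.sum_comm
    _ = ∑ r ∈ Icc 1 T, ((T - r*K : ℕ) : ℝ) * γ^(r*K) := by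
        refine Finset.sum_congr rfl (fun j _ => ?_)
        rw [Finset.sum_const]
        have : (Icc 1 T).filter (fun t => j*K < t) = Icc (j*K+1) T := by
          ext x
          simp only [Finset.mem_filter, mem_Icc]
          omega
        rw [this, Nat.card_Icc]
        rw [nsmul_eq_mul]
        congr 1
        congr 1
        omega


-- strict monotonicity of rank counts
lemma keymono (π : ℕ → ℕ) (a t t' : ℕ) (h0 : 1 ≤ t) (ha : a ≤ t) (htt : t < t')
    (hπ : π t = π t') :
    ((Icc a (t-1)).filter (fun j => π j = π t)).card
      < ((Icc a (t'-1)).filter (fun j => π j = π t')).card := by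
  have hsub : insert t ((Icc a (t-1)).filter (fun j => π j = π t))
      ⊆ (Icc a (t'-1)).filter (fun j => π j = π t') := by
    intro x hx
    rw [Finset.mem_insert] at hx
    rw [Finset.mem_filter, mem_Icc]
    rcases hx with rfl | hx
    · exact ⟨⟨ha, by omega⟩, hπ⟩
    · rw [Finset.mem_filter, mem_Icc] at hx
      exact ⟨⟨hx.1.1, by omega⟩, by rw [hx.2, hπ]⟩
  have hnot : t ∉ (Icc a (t-1)).filter (fun j => π j = π t) := by
    rw [Finset.mem_filter, mem_Icc]
    push_neg
    intro h
    omega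
  have := Finset.card_le_card hsub
  rw [Finset.card_insert_of_notMem hnot] at this
  omega

lemma keymono' (π : ℕ → ℕ) (i i' t : ℕ) (hii : i < i') (hit : i ≤ t - 1)
    (hπ : π i = π t) :
    ((Icc i' (t-1)).filter (fun j => π j = π t)).card
      < ((Icc i (t-1)).filter (fun j => π j = π t)).card := by
  have hsub : insert i ((Icc i' (t-1)).filter (fun j => π j = π t))
      ⊆ (Icc i (t-1)).filter (fun j => π j = π t) := by
    intro x hx
    rw [Finset.mem_insert] at hx
    rw [Finset.mem_filter, mem_Icc]
    rcases hx with rfl | hx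
    · exact ⟨⟨le_refl _, hit⟩, hπ⟩
    · rw [Finset.mem_filter, mem_Icc] at hx
      exact ⟨⟨by omega, hx.1.2⟩, hx.2⟩
  have hnot : i ∉ (Icc i' (t-1)).filter (fun j => π j = π t) := by
    rw [Finset.mem_filter, mem_Icc]
    push_neg
    intro h
    omega
  have := Finset.card_le_card hsub
  rw [Finset.card_insert_of_notMem hnot] at this
  omega
lemma le_pen (γ : ℝ) (h0 : 0 < γ) (h1 : γ < 1) (K T : ℕ) (hK : 0 < K)
    (π : ℕ → ℕ) (hvalid : ∀ t ∈ Finset.Icc 1 T, π t ∈ Finset.Icc 1 K) :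
    (∑ r ∈ Icc 1 T, ((T - r*K : ℕ) : ℝ) * γ^(r*K)) ≤ pen γ π T := by
  classical
  set P : Finset (ℕ × ℕ) :=
    ((Icc 1 T) ×ˢ (Icc 1 T)).filter (fun p => p.1 < p.2 ∧ π p.1 = π p.2) with hP
  set rk : ℕ × ℕ → ℕ :=
    fun p => ((Icc p.1 (p.2-1)).filter (fun j => π j = π p.2)).card with hrk
  have hPmem : ∀ p : ℕ × ℕ, p ∈ P ↔
      (1 ≤ p.1 ∧ p.1 ≤ T) ∧ (1 ≤ p.2 ∧ p.2 ≤ T) ∧ p.1 < p.2 ∧ π p.1 = π p.2 := by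
    intro p
    rw [hP, Finset.mem_filter, Finset.mem_product, mem_Icc, mem_Icc]
    tauto
  -- F1 : pen as a sum over pairs
  have F1 : pen γ π T = ∑ p ∈ P, γ^(p.2 - p.1) := by
    rw [hP, Finset.sum_filter, Finset.sum_product_right]
    unfold pen
    refine Finset.sum_congr rfl (fun t ht => ?_)
    rw [mem_Icc] at ht
    rw [← Finset.sum_filter]
    have : (Icc 1 T).filter (fun i => ((i, t) : ℕ × ℕ).1 < (i, t).2 ∧ π (i, t).1 = π (i, t).2)
        = (Icc 1 (t-1)).filter (fun i => π i = π t) := by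
      ext i
      simp only [Finset.mem_filter, mem_Icc]
      constructor
      · rintro ⟨⟨a, b⟩, c, d⟩
        exact ⟨⟨a, by omega⟩, d⟩
      · rintro ⟨⟨a, b⟩, d⟩
        exact ⟨⟨a, by omega⟩, by omega, d⟩
    rw [this]
  -- F2 : ranks lie in Icc 1 T
  have F2 : ∀ p ∈ P, rk p ∈ Icc 1 T := by
    intro p hp
    rw [hPmem] at hp
    obtain ⟨⟨ha1, ha2⟩, ⟨hb1, hb2⟩, hlt, heq⟩ := hp
    rw [mem_Icc]
    constructor
    · rw [hrk]
      refine Finset.card_pos.2 ⟨p.1, ?_⟩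
      rw [Finset.mem_filter, mem_Icc]
      exact ⟨⟨le_refl _, by omega⟩, heq⟩
    · rw [hrk]
      calc ((Icc p.1 (p.2-1)).filter (fun j => π j = π p.2)).card
          ≤ (Icc p.1 (p.2-1)).card := Finset.card_filter_le _ _
        _ ≤ T := by rw [Nat.card_Icc]; omega
  have F3 : pen γ π T
      = ∑ r ∈ Icc 1 T, ∑ p ∈ P.filter (fun p => rk p = r), γ^(p.2 - p.1) := by
    rw [F1, Finset.sum_fiberwise_of_maps_to F2]
  rw [F3]
  refine Finset.sum_le_sum (fun r hr => ?_)
  rw [mem_Icc] at hr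
  set Q := P.filter (fun p => rk p = r) with hQ
  set n := Q.card with hn
  have hQmem : ∀ p ∈ Q, p ∈ P ∧ rk p = r := by
    intro p hp
    rw [hQ, Finset.mem_filter] at hp
    exact hp
  -- G1 : snd injective on Q
  have G1 : Set.InjOn Prod.snd (Q : Set (ℕ × ℕ)) := by
    intro p hp q hq hpq
    obtain ⟨hpP, hpr⟩ := hQmem p (Finset.mem_coe.1 hp)
    obtain ⟨hqP, hqr⟩ := hQmem q (Finset.mem_coe.1 hq)
    rw [hPmem] at hpP hqP
    simp only [hrk] at hpr hqr
    have hp2 : p.2 = q.2 := hpq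
    have : p.1 = q.1 := by
      rcases lt_trichotomy p.1 q.1 with h | h | h
      · exfalso
        have := keymono' π p.1 q.1 p.2 h (by omega) hpP.2.2.2
        rw [← hp2] at hqr
        omega
      · exact h
      · exfalso
        have := keymono' π q.1 p.1 q.2 h (by omega) hqP.2.2.2
        rw [hp2] at hpr
        omega
    exact Prod.ext this hpq
  -- G2 : fst injective on Q
  have G2 : Set.InjOn Prod.fst (Q : Set (ℕ × ℕ)) := by
    intro p hp q hq hpq
    obtain ⟨hpP, hpr⟩ := hQmem p (Finset.mem_coe.1 hp)
    obtain ⟨hqP, hqr⟩ := hQmem q (Finset.mem_coe.1 hq)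
    rw [hPmem] at hpP hqP
    simp only [hrk] at hpr hqr
    have hp1 : p.1 = q.1 := hpq
    have : p.2 = q.2 := by
      rcases lt_trichotomy p.2 q.2 with h | h | h
      · exfalso
        have := keymono π p.1 p.2 q.2 (by omega) (by omega) h
          (by rw [← hpP.2.2.2, hp1, hqP.2.2.2])
        rw [← hp1] at hqr
        omega
      · exact h
      · exfalso
        have := keymono π q.1 q.2 p.2 (by omega) (by omega) h
          (by rw [← hqP.2.2.2, ← hp1, hpP.2.2.2])
        rw [hp1] at hpr
        omega
    exact Prod.ext hpq this
  set cnt : ℕ → ℕ := fun t => ((Icc 1 (t-1)).filter (fun i => π i = π t)).card with hcnt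
  -- G3 : T ≤ n + K * r
  have G3 : T ≤ n + r * K := by
    set C := (Icc 1 T).filter (fun t => cnt t < r) with hC
    set G := (Icc 1 T).filter (fun t => ¬ (cnt t < r)) with hG
    have hCG : C.card + G.card = T := by
      rw [hC, hG, Finset.card_filter_add_card_filter_not, Nat.card_Icc]
      omega
    have hCcard : C.card ≤ r * K := by
      have hmap : ∀ t ∈ C, (π t, cnt t) ∈ (Icc 1 K) ×ˢ (range r) := by
        intro t ht
        rw [hC, Finset.mem_filter] at ht
        rw [Finset.mem_product, Finset.mem_range]
        exact ⟨hvalid t ht.1, ht.2⟩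
      have hinj : Set.InjOn (fun t => (π t, cnt t)) (C : Set ℕ) := by
        intro t ht t' ht' he
        simp only [hC, Finset.coe_filter, Set.mem_setOf_eq, mem_Icc] at ht ht'
        simp only [Prod.mk.injEq] at he
        by_contra hne
        rcases lt_or_gt_of_ne hne with h | h
        · have := keymono π 1 t t' (by omega) (by omega) h he.1
          simp only [hcnt] at he
          omega
        · have := keymono π 1 t' t (by omega) (by omega) h he.1.symm
          simp only [hcnt] at he
          omega
      have := Finset.card_le_card_of_injOn _ hmap hinj
      rwa [Finset.card_product, Nat.card_Icc, Finset.card_range,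
        Nat.add_sub_cancel, mul_comm] at this
    have hGQ : G ⊆ Q.image Prod.snd := by
      intro t ht
      rw [hG, Finset.mem_filter, mem_Icc] at ht
      push_neg at ht
      obtain ⟨⟨ht1, ht2⟩, hrc⟩ := ht
      set S := (Icc 1 (t-1)).filter (fun i => π i = π t) with hS
      set ρ : ℕ → ℕ := fun i => ((Icc i (t-1)).filter (fun j => π j = π t)).card with hρ
      have hSmem : ∀ i ∈ S, 1 ≤ i ∧ i ≤ t - 1 ∧ π i = π t := by
        intro i hi
        rw [hS, Finset.mem_filter, mem_Icc] at hi
        exact ⟨hi.1.1, hi.1.2, hi.2⟩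
      have hρmem : ∀ i ∈ S, ρ i ∈ Icc 1 (cnt t) := by
        intro i hi
        obtain ⟨a, b, c⟩ := hSmem i hi
        rw [mem_Icc]
        constructor
        · refine Finset.card_pos.2 ⟨i, ?_⟩
          rw [Finset.mem_filter, mem_Icc]
          exact ⟨⟨le_refl _, b⟩, c⟩
        · rw [hcnt]
          refine Finset.card_le_card ?_
          intro x hx
          rw [Finset.mem_filter, mem_Icc] at hx ⊢
          exact ⟨⟨by omega, hx.1.2⟩, hx.2⟩
      have hρinj : Set.InjOn ρ (S : Set ℕ) := by
        intro i hi i' hi' he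
        rw [Finset.mem_coe] at hi hi'
        by_contra hne
        rcases lt_or_gt_of_ne hne with h | h
        · have := keymono' π i i' t h (hSmem i hi).2.1 (hSmem i hi).2.2
          simp only [hρ] at he
          omega
        · have := keymono' π i' i t h (hSmem i' hi').2.1 (hSmem i' hi').2.2
          simp only [hρ] at he
          omega
      have himg : S.image ρ = Icc 1 (cnt t) := by
        refine Finset.eq_of_subset_of_card_le ?_ ?_
        · intro x hx
          rw [Finset.mem_image] at hx
          obtain ⟨i, hi, hix⟩ := hx
          rw [← hix]
          exact hρmem i hi
        · rw [Finset.card_image_of_injOn hρinj, Nat.card_Icc, Nat.add_sub_cancel]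
      have hrmem : r ∈ S.image ρ := by
        rw [himg, mem_Icc]
        exact ⟨hr.1, hrc⟩
      rw [Finset.mem_image] at hrmem
      obtain ⟨i, hi, hir⟩ := hrmem
      obtain ⟨a, b, c⟩ := hSmem i hi
      rw [Finset.mem_image]
      refine ⟨(i, t), ?_, rfl⟩
      rw [hQ, Finset.mem_filter, hPmem]
      refine ⟨⟨⟨a, by omega⟩, ⟨ht1, ht2⟩, by omega, c⟩, ?_⟩
      rw [hrk]
      exact hir
    have hGcard : G.card ≤ n := by
      calc G.card ≤ (Q.image Prod.snd).card := Finset.card_le_card hGQ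
        _ ≤ Q.card := Finset.card_image_le
    omega
  -- cards of images
  have hBsub : Q.image Prod.snd ⊆ Icc 1 T := by
    intro x hx
    rw [Finset.mem_image] at hx
    obtain ⟨p, hp, hpx⟩ := hx
    obtain ⟨hpP, _⟩ := hQmem p hp
    rw [hPmem] at hpP
    rw [mem_Icc, ← hpx]
    exact ⟨hpP.2.1.1, hpP.2.1.2⟩
  have hnT : n ≤ T := by
    calc n = (Q.image Prod.snd).card := (Finset.card_image_of_injOn G1).symm
      _ ≤ (Icc 1 T).card := Finset.card_le_card hBsub
      _ = T := by rw [Nat.card_Icc]; omega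
  -- G4 : average gap bound
  have G4 : ∑ p ∈ Q, ((p.2 : ℝ) - (p.1 : ℝ)) ≤ (n : ℝ) * (r * K : ℕ) := by
    have hB : ∑ p ∈ Q, ((p.2 : ℝ)) = ∑ x ∈ Q.image Prod.snd, (x : ℝ) :=
      (Finset.sum_image (fun x hx y hy h => G1 hx hy h)).symm
    have hA : ∑ p ∈ Q, ((p.1 : ℝ)) = ∑ x ∈ Q.image Prod.fst, (x : ℝ) :=
      (Finset.sum_image (fun x hx y hy h => G2 hx hy h)).symm
    have hBcard : (Q.image Prod.snd).card = n := Finset.card_image_of_injOn G1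
    have hAcard : (Q.image Prod.fst).card = n := Finset.card_image_of_injOn G2
    have hupper : ∑ x ∈ Q.image Prod.snd, (x : ℝ)
        ≤ (∑ i ∈ Icc 1 n, (i:ℝ)) + n * ((T:ℝ) - n) :=
      sum_upper_aux T n _ hBcard hBsub
    have hlower : (∑ i ∈ Icc 1 n, (i:ℝ)) ≤ ∑ x ∈ Q.image Prod.fst, (x : ℝ) := by
      refine sum_lower_aux n _ hAcard ?_
      intro a ha
      rw [Finset.mem_image] at ha
      obtain ⟨p, hp, hpa⟩ := ha
      obtain ⟨hpP, _⟩ := hQmem p hp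
      rw [hPmem] at hpP
      omega
    have hTn : (T : ℝ) - n ≤ (r * K : ℕ) := by
      have : (T : ℝ) ≤ n + (r * K : ℕ) := by exact_mod_cast G3
      linarith
    have hn0 : (0:ℝ) ≤ n := Nat.cast_nonneg n
    rw [Finset.sum_sub_distrib, hB, hA]
    nlinarith [hupper, hlower, hTn, hn0]
  -- G5 : Jensen
  have G5 : (n : ℝ) * γ ^ (r * K) ≤ ∑ p ∈ Q, γ ^ (p.2 - p.1) := by
    refine sum_pow_ge γ h0 (le_of_lt h1) Q (fun p => p.2 - p.1) (r * K) ?_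
    have : ∑ p ∈ Q, ((p.2 - p.1 : ℕ) : ℝ) = ∑ p ∈ Q, ((p.2 : ℝ) - (p.1 : ℝ)) := by
      refine Finset.sum_congr rfl (fun p hp => ?_)
      obtain ⟨hpP, _⟩ := hQmem p hp
      rw [hPmem] at hpP
      rw [Nat.cast_sub (by omega)]
    rw [this]
    exact G4
  -- G6 : count bound
  have G6 : ((T - r*K : ℕ) : ℝ) ≤ (n : ℝ) := by
    have : T - r*K ≤ n := by omega
    exact_mod_cast this
  calc ((T - r*K : ℕ) : ℝ) * γ^(r*K) ≤ (n : ℝ) * γ^(r*K) :=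
        mul_le_mul_of_nonneg_right G6 (pow_nonneg (le_of_lt h0) _)
    _ ≤ ∑ p ∈ Q, γ ^ (p.2 - p.1) := G5

/-- With identical arm parameters, the cyclic (greedy) policy maximizes the
cumulative reward over all policies. -/
theorem stmt6 (K T : ℕ) (hK : 0 < K) (γ lam b : ℝ)
    (hγ : γ ∈ Set.Ico (0:ℝ) 1) (hlam : 0 ≤ lam)
    (π : ℕ → ℕ) (hvalid : ∀ t ∈ Finset.Icc 1 T, π t ∈ Finset.Icc 1 K) :
    cumReward γ lam b π T ≤ cumReward γ lam b (fun t => (t-1) % K + 1) T := by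
  obtain ⟨hγ0, hγ1⟩ := hγ
  rw [cumReward_eq, cumReward_eq]
  have key : pen γ (fun t => (t-1) % K + 1) T ≤ pen γ π T := by
    rcases eq_or_lt_of_le hγ0 with h | h
    · have hc : pen γ (fun t => (t-1) % K + 1) T = 0 := by
        unfold pen
        refine Finset.sum_eq_zero (fun t ht => Finset.sum_eq_zero (fun i hi => ?_))
        rw [mem_Icc] at ht
        rw [Finset.mem_filter, mem_Icc] at hi
        rw [← h]
        exact zero_pow (by omega)
      have hp : 0 ≤ pen γ π T :=
        Finset.sum_nonneg fun t _ => Finset.sum_nonneg fun i _ => pow_nonneg hγ0 _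
      rw [hc]
      exact hp
    · calc pen γ (fun t => (t-1) % K + 1) T
          ≤ ∑ r ∈ Icc 1 T, ((T - r*K : ℕ) : ℝ) * γ^(r*K) := pen_cyclic_le γ hγ0 K T hK
        _ ≤ pen γ π T := le_pen γ h hγ1 K T hK π hvalid
  have := mul_le_mul_of_nonneg_left key hlam
  linarith
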